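/- Let a_1, ..., a_m ∈ ℝ^d with empty-circumsphere data (S, c, r) as before, and let y be in the relative interior of the convex hull of {a_j : j ∈ S}, where {a_j : j ∈ S} are affinely independent. Then the weighted ℓ1 program min Σ_j x_j ‖y - a_j‖² over feasible representations of y has a unique minimizer, namely the barycentric coordinate vector of y with respect to {a_j : j ∈ S} (extended by zeros). -/

import Mathlib

/-!
Expanding `‖y - a j‖² = ‖(a j - c) - (y - c)‖²` and averaging over weights `z` that represent `y`
gives `∑ z j ‖y - a j‖² = ∑ z j ‖a j - c‖² - ‖y - c‖²`. Every `‖a j - c‖²` is at least `r²`,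
with equality exactly on `S`, so the cost of a representation is at least `r² - ‖y - c‖²`, with
equality exactly for the representations supported on `S`; among those, affine independence
leaves only the barycentric coordinates.
-/

open Finset

theorem sum_mul_norm_sub_sq_eq {ι E : Type*} [Fintype ι] [NormedAddCommGroup E]
    [InnerProductSpace ℝ E] {w : ι → ℝ} {a : ι → E} {y : E} (hw : ∑ j, w j = 1)
    (hy : ∑ j, w j • a j = y) (c : E) :
    ∑ j, w j * ‖y - a j‖ ^ 2 = ∑ j, w j * ‖a j - c‖ ^ 2 - ‖y - c‖ ^ 2 := by
  have hyc : ∑ j, w j • (a j - c) = y - c := by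
    simp only [smul_sub, sum_sub_distrib, hy, ← sum_smul, hw, one_smul]
  have hinner : ∑ j, w j * inner ℝ (a j - c) (y - c) = ‖y - c‖ ^ 2 := by
    simp only [← real_inner_smul_left, ← sum_inner, hyc, real_inner_self_eq_norm_sq]
  calc ∑ j, w j * ‖y - a j‖ ^ 2
      = ∑ j, (w j * ‖a j - c‖ ^ 2 - 2 * (w j * inner ℝ (a j - c) (y - c))
          + w j * ‖y - c‖ ^ 2) := by
        refine sum_congr rfl fun j _ => ?_
        rw [norm_sub_rev, show a j - y = (a j - c) - (y - c) by abel, norm_sub_sq_real]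
        ring
    _ = ∑ j, w j * ‖a j - c‖ ^ 2 - ‖y - c‖ ^ 2 := by
        rw [sum_add_distrib, sum_sub_distrib, ← mul_sum, hinner, ← sum_mul, hw]
        ring

section WeightedMean

variable {ι : Type*} [Fintype ι] {w f : ι → ℝ} {b : ℝ}

theorem sum_mul_eq_of_forall_ne_zero (hw : ∑ j, w j = 1) (hf : ∀ j, w j ≠ 0 → f j = b) :
    ∑ j, w j * f j = b := by
  calc ∑ j, w j * f j = ∑ j, w j * b := by
        refine sum_congr rfl fun j _ => ?_
        by_cases hj : w j = 0
        · simp [hj]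
        · rw [hf j hj]
    _ = b := by rw [← sum_mul, hw, one_mul]

theorem le_sum_mul_of_forall_le (hw0 : ∀ j, 0 ≤ w j) (hw : ∑ j, w j = 1) (hf : ∀ j, b ≤ f j) :
    b ≤ ∑ j, w j * f j := by
  calc b = ∑ j, w j * b := by rw [← sum_mul, hw, one_mul]
    _ ≤ ∑ j, w j * f j := sum_le_sum fun j _ => mul_le_mul_of_nonneg_left (hf j) (hw0 j)

theorem eq_zero_of_sum_mul_le_of_lt (hw0 : ∀ j, 0 ≤ w j) (hw : ∑ j, w j = 1)
    (hf : ∀ j, b ≤ f j) (hle : ∑ j, w j * f j ≤ b) {j : ι} (hj : b < f j) : w j = 0 := by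
  by_contra hne
  have hlt : ∑ i, w i * b < ∑ i, w i * f i :=
    sum_lt_sum (fun i _ => mul_le_mul_of_nonneg_left (hf i) (hw0 i))
      ⟨j, mem_univ j, mul_lt_mul_of_pos_left hj ((hw0 j).lt_of_ne' hne)⟩
  rw [← sum_mul, hw, one_mul] at hlt
  exact hlt.not_ge hle

end WeightedMean

theorem Finset.sum_coe_sort_of_forall_notMem_eq_zero {ι M : Type*} [Fintype ι]
    [AddCommMonoid M] (S : Finset ι) {g : ι → M} (hg : ∀ j ∉ S, g j = 0) :
    ∑ j : S, g j = ∑ j, g j :=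
  (sum_coe_sort S g).trans (sum_subset (subset_univ S) fun j _ hj => hg j hj)

theorem AffineIndependent.eq_of_sum_eq_sum_of_support_subset {ι k V : Type*} [Fintype ι]
    [Ring k] [AddCommGroup V] [Module k V] {a : ι → V} {S : Finset ι}
    (ha : AffineIndependent k fun j : S => a j) {w₁ w₂ : ι → k}
    (h₁ : ∀ j ∉ S, w₁ j = 0) (h₂ : ∀ j ∉ S, w₂ j = 0) (hw : ∑ j, w₁ j = ∑ j, w₂ j)
    (hwa : ∑ j, w₁ j • a j = ∑ j, w₂ j • a j) : w₁ = w₂ := by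
  have hS : ∀ j ∈ (univ : Finset S), w₁ j = w₂ j := by
    refine ha.eq_of_sum_eq_sum ?_ ?_
    · rwa [S.sum_coe_sort_of_forall_notMem_eq_zero h₁,
        S.sum_coe_sort_of_forall_notMem_eq_zero h₂]
    · rwa [S.sum_coe_sort_of_forall_notMem_eq_zero (g := fun j => w₁ j • a j)
          fun j hj => by simp [h₁ j hj],
        S.sum_coe_sort_of_forall_notMem_eq_zero (g := fun j => w₂ j • a j)
          fun j hj => by simp [h₂ j hj]]
  funext j
  by_cases hj : j ∈ S
  · exact hS ⟨j, hj⟩ (mem_univ _)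
  · rw [h₁ j hj, h₂ j hj]

theorem stmt_19 {d m : ℕ} (a : Fin m → EuclideanSpace ℝ (Fin d))
    (S : Finset (Fin m)) (c : EuclideanSpace ℝ (Fin d)) (r : ℝ) (hr : 0 < r)
    (hin : ∀ j ∈ S, ‖a j - c‖ = r) (hout : ∀ j ∉ S, r < ‖a j - c‖)
    (ha : AffineIndependent ℝ (fun j : S => a j))
    (x' : Fin m → ℝ) (y : EuclideanSpace ℝ (Fin d))
    (hx'0 : ∀ j, 0 ≤ x' j) (hx's : ∑ j, x' j = 1)
    (hsupp' : ∀ j, x' j ≠ 0 ↔ j ∈ S)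
    (hy : y = ∑ j, x' j • a j) :
    (∀ z : Fin m → ℝ, ((∀ j, 0 ≤ z j) ∧ ∑ j, z j = 1 ∧ ∑ j, z j • a j = y) →
      ∑ j, x' j * ‖y - a j‖ ^ 2 ≤ ∑ j, z j * ‖y - a j‖ ^ 2) ∧
    ∀ x : Fin m → ℝ,
      ((∀ j, 0 ≤ x j) ∧ ∑ j, x j = 1 ∧ ∑ j, x j • a j = y) →
      (∀ z : Fin m → ℝ, ((∀ j, 0 ≤ z j) ∧ ∑ j, z j = 1 ∧ ∑ j, z j • a j = y) →
        ∑ j, x j * ‖y - a j‖ ^ 2 ≤ ∑ j, z j * ‖y - a j‖ ^ 2) →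
      x = x' := by
  have hout_sq : ∀ j ∉ S, r ^ 2 < ‖a j - c‖ ^ 2 := fun j hj =>
    pow_lt_pow_left₀ (hout j hj) hr.le two_ne_zero
  have hge : ∀ j, r ^ 2 ≤ ‖a j - c‖ ^ 2 := fun j => by
    by_cases hj : j ∈ S
    · rw [hin j hj]
    · exact (hout_sq j hj).le
  have hx'S : ∀ j ∉ S, x' j = 0 := fun j hj => not_not.1 (mt (hsupp' j).1 hj)
  have hx'y : ∑ j, x' j • a j = y := hy.symm
  have hx'cost : ∑ j, x' j * ‖y - a j‖ ^ 2 = r ^ 2 - ‖y - c‖ ^ 2 := by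
    rw [sum_mul_norm_sub_sq_eq hx's hx'y c,
      sum_mul_eq_of_forall_ne_zero hx's fun j hj => by rw [hin j ((hsupp' j).1 hj)]]
  refine ⟨fun z ⟨hz0, hz1, hzy⟩ => ?_, fun x ⟨hx0, hx1, hxy⟩ hmin => ?_⟩
  · rw [hx'cost, sum_mul_norm_sub_sq_eq hz1 hzy c]
    linarith [le_sum_mul_of_forall_le hz0 hz1 hge]
  · have hle := hmin x' ⟨hx'0, hx's, hx'y⟩
    rw [hx'cost, sum_mul_norm_sub_sq_eq hx1 hxy c] at hle
    have hxS : ∀ j ∉ S, x j = 0 := fun j hj =>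
      eq_zero_of_sum_mul_le_of_lt hx0 hx1 hge (by linarith) (hout_sq j hj)
    exact ha.eq_of_sum_eq_sum_of_support_subset hxS hx'S (hx1.trans hx's.symm)
      (hxy.trans hx'y.symm)
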